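/- arXiv:1007.1129 — 4 statements merged into one kernel-verified Lean document; each statement's English description precedes it below -/
import Mathlib

section
/- Suppose X ⋔ Y, K ≥ 20, d_X(μ,μ') ≥ K and d_Y(μ,μ') ≥ K, and the Behrstock inequality holds. Then exactly one of the following holds: d_X(μ, ∂Y) ≥ 10, or d_Y(μ, ∂X) ≥ 10. In other words, X and Y are comparable under the relation X ≺ Y defined by d_X(μ, ∂Y) ≥ 10, and not both X ≺ Y and Y ≺ X can hold. -/
/-!
If `μ` were within 10 of `∂Y` in `X`, the triangle inequality would put `μ'` at distance at
least `K - 10 ≥ 10` from `∂Y` in `X`; Behrstock then puts `μ'` within 4 of `∂X` in `Y`, so `μ` is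
at least `K - 4` from `∂X` in `Y`. Conversely, Behrstock applied at `μ` forbids `μ` being far
from both boundaries at once.
-/

section SubsurfaceProjection

variable {Ω P : Type*} (d : Ω → P → P → ℝ) (bd : Ω → P) (pitch : Ω → Ω → Prop)

theorem behrstock_of_symm (hsymm : ∀ X a b, d X a b = d X b a)
    (hBeh : ∀ X Y, pitch X Y → ∀ ν : P, 10 ≤ d X (bd Y) ν → d Y (bd X) ν ≤ 4)
    {X Y : Ω} (hXY : pitch X Y) {ν : P} (h : 10 ≤ d X ν (bd Y)) :
    d Y ν (bd X) ≤ 4 := by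
  rw [hsymm] at h ⊢
  exact hBeh X Y hXY ν h

theorem sub_four_le_dist_bd_of_dist_bd_lt
    (htri : ∀ X a b c, d X a c ≤ d X a b + d X b c)
    (hBeh : ∀ X Y, pitch X Y → ∀ ν : P, 10 ≤ d X (bd Y) ν → d Y (bd X) ν ≤ 4)
    {X Y : Ω} (hXY : pitch X Y) {μ μ' : P} (hX : 20 ≤ d X μ μ')
    (hμ : d X μ (bd Y) < 10) :
    d Y μ μ' - 4 ≤ d Y μ (bd X) := by
  have hμ' : 10 ≤ d X (bd Y) μ' := by linarith [htri X μ (bd Y) μ']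
  linarith [hBeh X Y hXY μ' hμ', htri Y μ (bd X) μ']

end SubsurfaceProjection

theorem overlapping_subsurfaces_ordered_general
    {Ω P : Type*} (d : Ω → P → P → ℝ) (bd : Ω → P) (pitch : Ω → Ω → Prop)
    (hsymm : ∀ X a b, d X a b = d X b a)
    (htri : ∀ X a b c, d X a c ≤ d X a b + d X b c)
    (hBeh : ∀ X Y, pitch X Y → ∀ ν : P, 10 ≤ d X (bd Y) ν → d Y (bd X) ν ≤ 4)
    (X Y : Ω) (μ μ' : P) (K : ℝ) (hK : 20 ≤ K)
    (hXY : pitch X Y) (hX : K ≤ d X μ μ') (hY : K ≤ d Y μ μ') :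
    (10 ≤ d X μ (bd Y) ∨ 10 ≤ d Y μ (bd X)) ∧
      ¬ (10 ≤ d X μ (bd Y) ∧ 10 ≤ d Y μ (bd X)) := by
  constructor
  · by_contra! hnear
    have := sub_four_le_dist_bd_of_dist_bd_lt d bd pitch htri hBeh hXY (hK.trans hX) hnear.1
    linarith [hnear.2]
  · rintro ⟨hfarX, hfarY⟩
    have := behrstock_of_symm d bd pitch hsymm hBeh hXY hfarX
    linarith

/-- Abstract subsurface-projection setting as in the paper: if `X ⋔ Y`, `K ≥ 20`,
`d_X(μ,μ') ≥ K`, `d_Y(μ,μ') ≥ K` and the Behrstock inequality holds, then exactly one of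
`d_X(μ,∂Y) ≥ 10` (i.e. `X ≺ Y`) and `d_Y(μ,∂X) ≥ 10` (i.e. `Y ≺ X`) holds. -/
theorem overlapping_subsurfaces_ordered
    {Ω P : Type*} (d : Ω → P → P → ℝ) (bd : Ω → P) (pitch : Ω → Ω → Prop)
    (hsymm : ∀ X a b, d X a b = d X b a)
    (htri : ∀ X a b c, d X a c ≤ d X a b + d X b c)
    (hpitchsymm : ∀ X Y, pitch X Y → pitch Y X)
    (hBeh : ∀ X Y, pitch X Y → ∀ ν : P, 10 ≤ d X (bd Y) ν → d Y (bd X) ν ≤ 4)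
    (X Y : Ω) (μ μ' : P) (K : ℝ) (hK : 20 ≤ K)
    (hXY : pitch X Y) (hX : K ≤ d X μ μ') (hY : K ≤ d Y μ μ') :
    (10 ≤ d X μ (bd Y) ∨ 10 ≤ d Y μ (bd X)) ∧
      ¬ (10 ≤ d X μ (bd Y) ∧ 10 ≤ d Y μ (bd X)) :=
  overlapping_subsurfaces_ordered_general d bd pitch hsymm htri hBeh X Y μ μ' K hK hXY hX hY
end

section
/- Let G be a right-angled Artin group with generators s_1,…,s_n, and suppose φ: G → Isom(X) is an action on a metric space X with basepoint μ such that there exist constants K ≥ 1, A ≥ 1, B ≥ 0 with: for every σ ∈ G and every minimal word x_1^{e_1}⋯x_k^{e_k} ∈ Min(σ), there exist k distinct 'witnesses' W_1,…,W_k with associated quantities d_{W_i}(μ, φ(σ)μ) ≥ K|e_i|, and the sum ∑_i d_{W_i}(μ, φ(σ)μ) ≤ A·d(μ, φ(σ)μ) + B. Then the orbit map G → X, σ ↦ φ(σ)μ, is a quasi-isometric embedding with respect to the word metric on G. -/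
/-- The commutator relators of a right-angled Artin group on the graph `Γ`. -/
def raagRel {V : Type*} (Γ : SimpleGraph V) : Set (FreeGroup V) :=
  {r | ∃ u v : V, Γ.Adj u v ∧
    r = FreeGroup.of u * FreeGroup.of v * (FreeGroup.of u)⁻¹ * (FreeGroup.of v)⁻¹}

/-- The right-angled Artin group on the graph `Γ`. -/
abbrev RAAG {V : Type*} (Γ : SimpleGraph V) := PresentedGroup (raagRel Γ)

/-- The generator of `RAAG Γ` corresponding to the vertex `v`. -/
def raagGen {V : Type*} (Γ : SimpleGraph V) (v : V) : RAAG Γ :=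
  PresentedGroup.of (rels := raagRel Γ) v

/-- The element of `RAAG Γ` represented by a word in syllable form
`x₁^{e₁} ⋯ x_k^{e_k}`, encoded as a list of (generator, exponent) pairs. -/
def wordProd {V : Type*} (Γ : SimpleGraph V) (w : List (V × ℤ)) : RAAG Γ :=
  (w.map fun p => (raagGen Γ p.1) ^ p.2).prod

/-- `w` is a word for `σ` with the minimal number of syllables (`w ∈ Min(σ)`). -/
def IsMinWord {V : Type*} (Γ : SimpleGraph V) (σ : RAAG Γ) (w : List (V × ℤ)) : Prop :=
  wordProd Γ w = σ ∧ ∀ w' : List (V × ℤ), wordProd Γ w' = σ → w.length ≤ w'.length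

/-- The number of syllables of `σ`: the least number of syllables of a word representing it. -/
noncomputable def sylCount {V : Type*} (Γ : SimpleGraph V) (σ : RAAG Γ) : ℕ :=
  sInf {k | ∃ w : List (V × ℤ), wordProd Γ w = σ ∧ w.length = k}

/-- Number of earlier occurrences of the syllable at position `i` in `w`. -/
def occCount {V : Type*} [DecidableEq V] [Inhabited V] (w : List (V × ℤ)) (i : ℕ) : ℕ :=
  (w.take i).count (w.getD i default)

/-- Position `i'` of `w'` carries the same syllable (same generator, exponent and
occurrence number) as position `i` of `w`. -/
def sylMatch {V : Type*} [DecidableEq V] [Inhabited V]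
    (w w' : List (V × ℤ)) (i i' : ℕ) : Prop :=
  i < w.length ∧ i' < w'.length ∧ w'.getD i' default = w.getD i default ∧
    occCount w' i' = occCount w i

/-- The syllable partial order on `syl(σ)`: the syllable at position `i` of the minimal
word `w` precedes the one at position `j` in *every* minimal word for `σ`. -/
def sylPrec {V : Type*} [DecidableEq V] [Inhabited V] (Γ : SimpleGraph V) (σ : RAAG Γ)
    (w : List (V × ℤ)) (i j : ℕ) : Prop :=
  ∀ w' : List (V × ℤ), IsMinWord Γ σ w' →
    ∀ i' j' : ℕ, sylMatch w w' i i' → sylMatch w w' j j' → i' < j'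

/-- The subsurface assigned to the `m`-th syllable of the word `w`:
`X^w(x_m^{e_m}) = φ(x₁^{e₁}⋯x_{m-1}^{e_{m-1}})(X_{J(m)})`. -/
def sylSubsurface {V S : Type*} [Inhabited V] (Γ : SimpleGraph V)
    (φ : RAAG Γ →* Equiv.Perm S) (X : V → Set S) (w : List (V × ℤ)) (m : ℕ) : Set S :=
  (φ (wordProd Γ (w.take m))) '' X (w.getD m default).1

/-- Word length in `RAAG Γ` with respect to the standard generators. -/
noncomputable def raagWordLen {V : Type*} (Γ : SimpleGraph V) (σ : RAAG Γ) : ℕ :=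
  sInf {k | ∃ l : List (RAAG Γ),
    (∀ y ∈ l, ∃ v : V, y = raagGen Γ v ∨ y = (raagGen Γ v)⁻¹) ∧
    l.prod = σ ∧ l.length = k}

/-!
Along a geodesic word in the standard generators the orbit point moves by at most
`C = ∑ᵥ d(μ, φ(v)μ)` per letter, which gives the upper bound. For the lower bound, a minimal
syllable word `x₁^{e₁} ⋯ x_k^{e_k}` for `σ` spells `σ` with `∑ |eᵢ|` letters, and the witnesses give
`∑ |eᵢ| ≤ ∑ d_{Wᵢ}(μ, φ(σ)μ) ≤ A·d(μ, φ(σ)μ) + B`. Both estimates pass from `(1, σ⁻¹τ)` to `(σ, τ)`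
because the group acts by isometries.
-/

section IsometryHom

variable {G X : Type*} [Group G] [PseudoMetricSpace X] (φ : G →* (X ≃ᵢ X)) (x : X)

theorem dist_apply_inv_eq (g : G) : dist x (φ g⁻¹ x) = dist x (φ g x) := by
  rw [← (φ g).dist_eq, map_inv, IsometryEquiv.apply_inv_self, dist_comm]

theorem dist_apply_apply_eq (g h : G) : dist (φ g x) (φ h x) = dist x (φ (g⁻¹ * h) x) := by
  rw [map_mul, IsometryEquiv.mul_apply, map_inv, ← (φ g).dist_eq x, IsometryEquiv.apply_inv_self]

theorem dist_apply_list_prod_le {C : ℝ} (l : List G) (hl : ∀ g ∈ l, dist x (φ g x) ≤ C) :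
    dist x (φ l.prod x) ≤ C * l.length := by
  induction l with
  | nil => simp
  | cons g l ih =>
    have hg := hl g List.mem_cons_self
    have hrest := ih fun h hh => hl h (List.mem_cons_of_mem _ hh)
    calc dist x (φ (g :: l).prod x)
        ≤ dist x (φ g x) + dist (φ g x) (φ g (φ l.prod x)) := by
          rw [List.prod_cons, map_mul, IsometryEquiv.mul_apply]; exact dist_triangle _ _ _
      _ = dist x (φ g x) + dist x (φ l.prod x) := by rw [(φ g).dist_eq]
      _ ≤ C * (g :: l).length := by push_cast [List.length_cons]; linarith

end IsometryHom

theorem pow_natAbs_eq_zpow {G : Type*} [Group G] (g : G) (e : ℤ) :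
    (if 0 ≤ e then g else g⁻¹) ^ e.natAbs = g ^ e := by
  split_ifs with he
  · rw [← zpow_natCast, Int.natAbs_of_nonneg he]
  · rw [inv_pow, ← zpow_natCast, Int.ofNat_natAbs_of_nonpos (le_of_not_ge he), zpow_neg, inv_inv]

namespace RAAG

variable {V : Type*} (Γ : SimpleGraph V)

theorem exists_list_prod_eq (σ : RAAG Γ) : ∃ l : List (RAAG Γ),
    (∀ y ∈ l, ∃ v : V, y = raagGen Γ v ∨ y = (raagGen Γ v)⁻¹) ∧ l.prod = σ := by
  have htop : Subgroup.closure (Set.range (raagGen Γ)) = ⊤ := PresentedGroup.closure_range_of _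
  have hσ : σ ∈ Submonoid.closure (Set.range (raagGen Γ) ∪ (Set.range (raagGen Γ))⁻¹) := by
    rw [← Subgroup.closure_toSubmonoid, htop]
    exact Subgroup.mem_top σ
  obtain ⟨l, hl, hprod⟩ := Submonoid.exists_list_of_mem_closure hσ
  refine ⟨l, fun y hy => ?_, hprod⟩
  rcases hl y hy with ⟨v, rfl⟩ | ⟨v, hv⟩
  · exact ⟨v, Or.inl rfl⟩
  · exact ⟨v, Or.inr (inv_eq_iff_eq_inv.mp hv.symm)⟩

theorem exists_list_length_eq_raagWordLen (σ : RAAG Γ) : ∃ l : List (RAAG Γ),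
    (∀ y ∈ l, ∃ v : V, y = raagGen Γ v ∨ y = (raagGen Γ v)⁻¹) ∧
      l.prod = σ ∧ l.length = raagWordLen Γ σ := by
  obtain ⟨l, hl, hprod⟩ := exists_list_prod_eq Γ σ
  exact Nat.sInf_mem (s := {k | ∃ l : List (RAAG Γ),
    (∀ y ∈ l, ∃ v : V, y = raagGen Γ v ∨ y = (raagGen Γ v)⁻¹) ∧ l.prod = σ ∧ l.length = k})
    ⟨l.length, l, hl, hprod, rfl⟩

theorem raagWordLen_list_prod_le {l : List (RAAG Γ)}
    (hl : ∀ y ∈ l, ∃ v : V, y = raagGen Γ v ∨ y = (raagGen Γ v)⁻¹) :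
    raagWordLen Γ l.prod ≤ l.length :=
  Nat.sInf_le ⟨l, hl, rfl, rfl⟩

theorem exists_wordProd_eq (σ : RAAG Γ) : ∃ w : List (V × ℤ), wordProd Γ w = σ := by
  obtain ⟨l, hl, rfl⟩ := exists_list_prod_eq Γ σ
  induction l with
  | nil => exact ⟨[], rfl⟩
  | cons y l ih =>
    obtain ⟨w, hw⟩ := ih fun z hz => hl z (List.mem_cons_of_mem _ hz)
    obtain ⟨v, rfl | rfl⟩ := hl y List.mem_cons_self
    · exact ⟨(v, 1) :: w, by simp [wordProd] at hw ⊢; rw [hw]⟩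
    · exact ⟨(v, -1) :: w, by simp [wordProd] at hw ⊢; rw [hw]⟩

theorem exists_isMinWord (σ : RAAG Γ) : ∃ w, IsMinWord Γ σ w := by
  obtain ⟨w₀, hw₀⟩ := exists_wordProd_eq Γ σ
  obtain ⟨w, hw, hlen⟩ :=
    Nat.sInf_mem (s := {k | ∃ w : List (V × ℤ), wordProd Γ w = σ ∧ w.length = k})
      ⟨w₀.length, w₀, hw₀, rfl⟩
  exact ⟨w, hw, fun w' hw' => hlen ▸ Nat.sInf_le ⟨w', hw', rfl⟩⟩

theorem raagWordLen_wordProd_le (w : List (V × ℤ)) :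
    raagWordLen Γ (wordProd Γ w) ≤ (w.map fun p => p.2.natAbs).sum := by
  let letter (p : V × ℤ) : RAAG Γ := if 0 ≤ p.2 then raagGen Γ p.1 else (raagGen Γ p.1)⁻¹
  let l := w.flatMap fun p => List.replicate p.2.natAbs (letter p)
  have hprod : l.prod = wordProd Γ w := by
    induction w with
    | nil => rfl
    | cons p w ih =>
      simp only [l, wordProd, List.flatMap_cons, List.prod_append, List.prod_replicate,
        List.map_cons, List.prod_cons] at ih ⊢
      rw [ih, pow_natAbs_eq_zpow]
  have hl : ∀ y ∈ l, ∃ v : V, y = raagGen Γ v ∨ y = (raagGen Γ v)⁻¹ := by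
    simp only [l, List.mem_flatMap, List.mem_replicate]
    rintro y ⟨p, -, -, rfl⟩
    exact ⟨p.1, by by_cases hp : 0 ≤ p.2 <;> simp [letter, hp]⟩
  calc raagWordLen Γ (wordProd Γ w) = raagWordLen Γ l.prod := by rw [hprod]
    _ ≤ l.length := raagWordLen_list_prod_le Γ hl
    _ = (w.map fun p => p.2.natAbs).sum := by simp [l, List.length_flatMap]

theorem raagWordLen_wordProd_le_sum_abs (w : List (V × ℤ)) :
    (raagWordLen Γ (wordProd Γ w) : ℝ) ≤ ∑ i : Fin w.length, |((w.get i).2 : ℝ)| := by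
  calc (raagWordLen Γ (wordProd Γ w) : ℝ) ≤ ((w.map fun p => p.2.natAbs).sum : ℕ) := by
        exact_mod_cast raagWordLen_wordProd_le Γ w
    _ = ∑ i : Fin w.length, |((w.get i).2 : ℝ)| := by
        rw [Nat.cast_list_sum, List.map_map, ← Fin.sum_univ_fun_getElem]
        simp [Nat.cast_natAbs]

theorem dist_apply_le_mul_raagWordLen {X : Type*} [PseudoMetricSpace X] (φ : RAAG Γ →* (X ≃ᵢ X))
    (x : X) {C : ℝ} (hC : ∀ v, dist x (φ (raagGen Γ v) x) ≤ C) (σ : RAAG Γ) :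
    dist x (φ σ x) ≤ C * raagWordLen Γ σ := by
  obtain ⟨l, hl, rfl, hlen⟩ := exists_list_length_eq_raagWordLen Γ σ
  rw [← hlen]
  refine dist_apply_list_prod_le φ x l fun y hy => ?_
  obtain ⟨v, rfl | rfl⟩ := hl y hy
  · exact hC v
  · exact (dist_apply_inv_eq φ x _).trans_le (hC v)

end RAAG

/-- If a right-angled Artin group acts by isometries on `X` and for every `σ` and every
minimal word for `σ` there are distinct witnesses `W₁,…,W_k` with
`d_{W_i}(μ, φ(σ)μ) ≥ K·|e_i|` and `∑ d_{W_i}(μ, φ(σ)μ) ≤ A·d(μ, φ(σ)μ) + B`, then the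
orbit map `σ ↦ φ(σ)μ` is a quasi-isometric embedding for the word metric on the group. -/
theorem raag_orbit_map_qi_embedding {V : Type*} [Fintype V]
    (Γ : SimpleGraph V) {X : Type*} [MetricSpace X]
    (φ : RAAG Γ →* (X ≃ᵢ X)) (μ : X)
    (W : Type*) (dW : RAAG Γ → W → ℝ)
    (K A B : ℝ) (hK : 1 ≤ K) (hA : 1 ≤ A) (hB : 0 ≤ B)
    (hwit : ∀ σ : RAAG Γ, ∀ w : List (V × ℤ), IsMinWord Γ σ w →
      ∃ f : Fin w.length → W, Function.Injective f ∧
        (∀ i : Fin w.length, K * |((w.get i).2 : ℝ)| ≤ dW σ (f i)) ∧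
        (∑ i : Fin w.length, dW σ (f i)) ≤ A * dist μ (φ σ μ) + B) :
    ∃ A' B' : ℝ, 1 ≤ A' ∧ 0 ≤ B' ∧ ∀ σ τ : RAAG Γ,
      ((raagWordLen Γ (σ⁻¹ * τ) : ℝ) - B') / A' ≤ dist (φ σ μ) (φ τ μ) ∧
      dist (φ σ μ) (φ τ μ) ≤ A' * (raagWordLen Γ (σ⁻¹ * τ) : ℝ) + B' := by
  set C := ∑ v, dist μ (φ (raagGen Γ v) μ)
  have hC : 0 ≤ C := Finset.sum_nonneg fun _ _ => dist_nonneg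
  have hC_gen (v : V) : dist μ (φ (raagGen Γ v) μ) ≤ C :=
    Finset.single_le_sum (f := fun u => dist μ (φ (raagGen Γ u) μ)) (fun _ _ => dist_nonneg)
      (Finset.mem_univ v)
  have hlower (g : RAAG Γ) : (raagWordLen Γ g : ℝ) ≤ A * dist μ (φ g μ) + B := by
    obtain ⟨w, hw⟩ := RAAG.exists_isMinWord Γ g
    obtain ⟨f, -, hf, hsum⟩ := hwit g w hw
    calc (raagWordLen Γ g : ℝ) ≤ ∑ i : Fin w.length, |((w.get i).2 : ℝ)| :=
          hw.1 ▸ RAAG.raagWordLen_wordProd_le_sum_abs Γ w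
      _ ≤ ∑ i : Fin w.length, K * |((w.get i).2 : ℝ)| :=
          Finset.sum_le_sum fun _ _ => le_mul_of_one_le_left (abs_nonneg _) hK
      _ ≤ ∑ i : Fin w.length, dW g (f i) := Finset.sum_le_sum fun i _ => hf i
      _ ≤ A * dist μ (φ g μ) + B := hsum
  refine ⟨A + C, B, by linarith, hB, fun σ τ => ?_⟩
  have hupper := RAAG.dist_apply_le_mul_raagWordLen Γ φ μ hC_gen (σ⁻¹ * τ)
  have hCd := mul_nonneg hC (dist_nonneg (x := μ) (y := φ (σ⁻¹ * τ) μ))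
  have hAn := mul_nonneg (by linarith : (0 : ℝ) ≤ A) (Nat.cast_nonneg (raagWordLen Γ (σ⁻¹ * τ)))
  rw [dist_apply_apply_eq, div_le_iff₀ (by linarith)]
  exact ⟨by linarith [hlower (σ⁻¹ * τ)], by linarith⟩
end

section
/- Let w = x_1^{e_1}⋯x_k^{e_k} and w' = x_1^{e_1}⋯x_{i+1}^{e_{i+1}} x_i^{e_i}⋯x_k^{e_k} be two words differing by a swap of adjacent commuting syllables (so [x_i, x_{i+1}] = 1), both in Min(σ). Suppose φ: G(Γ) → Homeo(S) realizes each generator s_j as a map supported on a region X_j, with X_i ∩ X_j = ∅ whenever s_i and s_j commute. Then the 'subsurface assignment' maps agree: for each syllable x_m^{e_m}, φ(x_1^{e_1}⋯x_{m-1}^{e_{m-1}})(X_{J(m)}) computed from w equals the corresponding region computed from w', where J(m) is the index with x_m = s_{J(m)}. Key step: since the support of φ(x_{i+1}^{e_{i+1}}) is disjoint from X_{J(i)}, we have φ(x_{i+1}^{e_{i+1}})(X_{J(i)}) = X_{J(i)}. -/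
/-!
Write `w = t ++ a :: b :: r`, so that `w' = t ++ b :: a :: r`. The prefixes of `w` and `w'`
coincide up to length `|t|`, and from length `|t| + 2` on their products agree because the
powers of the commuting generators of `a` and `b` commute. So only the regions of `a` and `b`
themselves need an argument, and there the extra factor `φ (b^e)` (resp. `φ (a^e)`) fixes
`X a` (resp. `X b`) setwise, being the identity off `X b`, which is disjoint from `X a`.
-/

theorem raagGen_commute_of_adj {V : Type*} (Γ : SimpleGraph V) {u v : V} (h : Γ.Adj u v) :
    Commute (raagGen Γ u) (raagGen Γ v) := by
  rw [← commutatorElement_eq_one_iff_commute, commutatorElement_def]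
  simpa only [raagGen, PresentedGroup.of, map_mul, map_inv] using
    PresentedGroup.one_of_mem (rels := raagRel Γ) ⟨u, v, h, rfl⟩

theorem wordProd_append {V : Type*} (Γ : SimpleGraph V) (l₁ l₂ : List (V × ℤ)) :
    wordProd Γ (l₁ ++ l₂) = wordProd Γ l₁ * wordProd Γ l₂ := by
  simp [wordProd]

theorem wordProd_cons {V : Type*} (Γ : SimpleGraph V) (p : V × ℤ) (l : List (V × ℤ)) :
    wordProd Γ (p :: l) = raagGen Γ p.1 ^ p.2 * wordProd Γ l := by
  simp [wordProd]

theorem Equiv.Perm.zpow_image_eq_of_disjoint {S : Type*} {f : Equiv.Perm S} {A B : Set S}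
    (hf : ∀ s ∉ A, f s = s) (hAB : _root_.Disjoint A B) (n : ℤ) : ⇑(f ^ n) '' B = B :=
  Set.EqOn.image_eq_self fun s hs =>
    Function.IsFixedPt.perm_zpow (hf s (hAB.notMem_of_mem_right hs)) n

theorem image_zpow_raagGen_of_adj {V S : Type*} {Γ : SimpleGraph V}
    {φ : RAAG Γ →* Equiv.Perm S} {X : V → Set S}
    (hsupp : ∀ (v : V) (s : S), s ∉ X v → φ (raagGen Γ v) s = s)
    (hdisj : ∀ u v : V, Γ.Adj u v → X u ∩ X v = ∅) {u v : V} (h : Γ.Adj u v) (n : ℤ) :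
    φ (raagGen Γ u ^ n) '' X v = X v := by
  rw [map_zpow]
  exact Equiv.Perm.zpow_image_eq_of_disjoint (hsupp u)
    (Set.disjoint_iff_inter_eq_empty.mpr (hdisj u v h)) n

theorem List.exists_eq_append_getD_cons_getD_cons {α : Type*} (l : List α) (d : α) {i : ℕ}
    (hi : i + 1 < l.length) :
    ∃ t r, t.length = i ∧ l = t ++ l.getD i d :: l.getD (i + 1) d :: r := by
  refine ⟨l.take i, l.drop (i + 2), by simp; omega, ?_⟩
  rw [List.getD_eq_getElem _ _ (by omega), List.getD_eq_getElem _ _ hi,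
    ← List.drop_eq_getElem_cons hi, ← List.drop_eq_getElem_cons, List.take_append_drop]

section sylSubsurface

variable {V S : Type*} [Inhabited V] {Γ : SimpleGraph V} {φ : RAAG Γ →* Equiv.Perm S}
  {X : V → Set S}

theorem sylSubsurface_append_of_lt (t l : List (V × ℤ)) {m : ℕ} (hm : m < t.length) :
    sylSubsurface Γ φ X (t ++ l) m = sylSubsurface Γ φ X t m := by
  simp only [sylSubsurface, List.take_append_of_le_length hm.le, List.getD_append _ _ _ _ hm]

theorem sylSubsurface_append_length_add (t l : List (V × ℤ)) (n : ℕ) :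
    sylSubsurface Γ φ X (t ++ l) (t.length + n) = φ (wordProd Γ t) '' sylSubsurface Γ φ X l n := by
  rw [sylSubsurface, sylSubsurface, List.take_length_add_append,
    List.getD_append_right _ _ _ _ (Nat.le_add_right _ _), Nat.add_sub_cancel_left,
    wordProd_append, map_mul, Equiv.Perm.coe_mul, Set.image_comp]

theorem sylSubsurface_zero (p : V × ℤ) (l : List (V × ℤ)) :
    sylSubsurface Γ φ X (p :: l) 0 = X p.1 := by
  simp [sylSubsurface, wordProd]

theorem sylSubsurface_cons_succ (p : V × ℤ) (l : List (V × ℤ)) (n : ℕ) :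
    sylSubsurface Γ φ X (p :: l) (n + 1) = φ (raagGen Γ p.1 ^ p.2) '' sylSubsurface Γ φ X l n := by
  rw [sylSubsurface, sylSubsurface, List.take_succ_cons, List.getD_cons_succ, wordProd_cons,
    map_mul, Equiv.Perm.coe_mul, Set.image_comp]

theorem sylSubsurface_cons_cons_swap
    (hsupp : ∀ (v : V) (s : S), s ∉ X v → φ (raagGen Γ v) s = s)
    (hdisj : ∀ u v : V, Γ.Adj u v → X u ∩ X v = ∅)
    {a b : V × ℤ} (hab : Γ.Adj a.1 b.1) (r : List (V × ℤ)) (n : ℕ) :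
    sylSubsurface Γ φ X (a :: b :: r) n = sylSubsurface Γ φ X (b :: a :: r) (Equiv.swap 0 1 n) := by
  have hcomm := ((raagGen_commute_of_adj Γ hab).zpow_zpow a.2 b.2).eq
  rcases n with _ | _ | k
  · rw [Equiv.swap_apply_left, sylSubsurface_zero, sylSubsurface_cons_succ, sylSubsurface_zero,
      image_zpow_raagGen_of_adj hsupp hdisj hab.symm]
  · rw [Equiv.swap_apply_right, sylSubsurface_zero, sylSubsurface_cons_succ, sylSubsurface_zero,
      image_zpow_raagGen_of_adj hsupp hdisj hab]
  · rw [Equiv.swap_apply_of_ne_of_ne (by omega) (by omega)]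
    simp only [sylSubsurface_cons_succ, Set.image_image, ← Equiv.Perm.mul_apply, ← map_mul, hcomm]

theorem sylSubsurface_append_swap
    (hsupp : ∀ (v : V) (s : S), s ∉ X v → φ (raagGen Γ v) s = s)
    (hdisj : ∀ u v : V, Γ.Adj u v → X u ∩ X v = ∅)
    (t r : List (V × ℤ)) {a b : V × ℤ} (hab : Γ.Adj a.1 b.1) (m : ℕ) :
    sylSubsurface Γ φ X (t ++ a :: b :: r) m =
      sylSubsurface Γ φ X (t ++ b :: a :: r) (Equiv.swap t.length (t.length + 1) m) := by
  obtain hm | ⟨n, rfl⟩ : m < t.length ∨ ∃ n, m = t.length + n :=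
    (lt_or_ge m t.length).imp_right Nat.exists_eq_add_of_le
  · rw [Equiv.swap_apply_of_ne_of_ne hm.ne (by omega), sylSubsurface_append_of_lt _ _ hm,
      sylSubsurface_append_of_lt _ _ hm]
  · have hswap := (add_right_injective t.length).swap_apply 0 1 n
    simp only [add_zero] at hswap
    rw [hswap, sylSubsurface_append_length_add, sylSubsurface_append_length_add,
      sylSubsurface_cons_cons_swap hsupp hdisj hab]

end sylSubsurface

theorem subsurface_assignment_swap_invariant_general {V S : Type*} [Inhabited V]
    (Γ : SimpleGraph V) (φ : RAAG Γ →* Equiv.Perm S) (X : V → Set S)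
    (hsupp : ∀ (v : V) (s : S), s ∉ X v → φ (raagGen Γ v) s = s)
    (hdisj : ∀ u v : V, Γ.Adj u v → X u ∩ X v = ∅)
    (w w' : List (V × ℤ)) (i : ℕ)
    (hi : i + 1 < w.length)
    (hcomm : Γ.Adj (w.getD i default).1 (w.getD (i + 1) default).1)
    (hw' : w' = (w.set i (w.getD (i + 1) default)).set (i + 1) (w.getD i default)) :
    ((φ ((raagGen Γ (w.getD (i + 1) default).1) ^ (w.getD (i + 1) default).2)) ''
        X (w.getD i default).1 = X (w.getD i default).1) ∧
    ∀ m, m < w.length →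
      sylSubsurface Γ φ X w m = sylSubsurface Γ φ X w' (Equiv.swap i (i + 1) m) := by
  obtain ⟨t, r, rfl, hw⟩ := w.exists_eq_append_getD_cons_getD_cons default hi
  generalize w.getD t.length default = a, w.getD (t.length + 1) default = b at *
  subst hw
  obtain rfl : w' = t ++ b :: a :: r := by simpa [List.set_append] using hw'
  exact ⟨image_zpow_raagGen_of_adj hsupp hdisj hcomm.symm _,
    fun m _ => sylSubsurface_append_swap hsupp hdisj t r hcomm m⟩

/-- Lemma "Xsigma", single-swap case: if `w' ∈ Min(σ)` is obtained from `w ∈ Min(σ)` by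
swapping the adjacent commuting syllables at positions `i` and `i+1`, and commuting
generators have disjoint supports, then the subsurface assignments of `w` and `w'` agree
(under the position swap `i ↔ i+1`); the key step being that `φ(x_{i+1}^{e_{i+1}})` fixes
`X_{J(i)}` setwise. -/
theorem subsurface_assignment_swap_invariant {V S : Type*} [Inhabited V]
    (Γ : SimpleGraph V) (φ : RAAG Γ →* Equiv.Perm S) (X : V → Set S)
    (hsupp : ∀ (v : V) (s : S), s ∉ X v → φ (raagGen Γ v) s = s)
    (hdisj : ∀ u v : V, Γ.Adj u v → X u ∩ X v = ∅)
    (σ : RAAG Γ) (w w' : List (V × ℤ)) (i : ℕ)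
    (hmin : IsMinWord Γ σ w) (hmin' : IsMinWord Γ σ w')
    (hi : i + 1 < w.length)
    (hcomm : Γ.Adj (w.getD i default).1 (w.getD (i + 1) default).1)
    (hw' : w' = (w.set i (w.getD (i + 1) default)).set (i + 1) (w.getD i default)) :
    ((φ ((raagGen Γ (w.getD (i + 1) default).1) ^ (w.getD (i + 1) default).2)) ''
        X (w.getD i default).1 = X (w.getD i default).1) ∧
    ∀ m, m < w.length →
      sylSubsurface Γ φ X w m = sylSubsurface Γ φ X w' (Equiv.swap i (i + 1) m) :=
  subsurface_assignment_swap_invariant_general Γ φ X hsupp hdisj w w' i hi hcomm hw'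
end

section
/- In a right-angled Artin group G(Γ), two distinct syllables of a minimal word w ∈ Min(σ) that represent the same group element (same generator, same exponent) never exchange their relative order: if x_i^{e_i} precedes x_j^{e_j} in w with x_i = x_j and e_i = e_j, then in every word of Min(σ) obtained from w by swaps of adjacent commuting syllables, the image of x_i^{e_i} still precedes the image of x_j^{e_j}. Consequently, any sequence of commuting swaps bringing w back to itself induces the identity permutation on the set of syllables. -/
/-- Swap the entries of `w` at positions `i` and `i+1`. -/
def swapAt' {V : Type*} [Inhabited V] (w : List (V × ℤ)) (i : ℕ) : List (V × ℤ) :=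
  (w.set i (w.getD (i + 1) default)).set (i + 1) (w.getD i default)

/-- Apply a sequence of adjacent-transposition moves (given by their positions) to `w`. -/
def applySwaps {V : Type*} [Inhabited V] : List ℕ → List (V × ℤ) → List (V × ℤ)
  | [], w => w
  | i :: rest, w => applySwaps rest (swapAt' w i)

/-- The sequence of moves is valid: each swap exchanges adjacent *commuting* syllables. -/
def ValidSeq {V : Type*} [Inhabited V] (Γ : SimpleGraph V) :
    List ℕ → List (V × ℤ) → Prop
  | [], _ => True
  | i :: rest, w =>
      (i + 1 < w.length ∧ Γ.Adj (w.getD i default).1 (w.getD (i + 1) default).1) ∧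
        ValidSeq Γ rest (swapAt' w i)

/-- The permutation of syllable positions induced by a sequence of swaps. -/
def seqPerm : List ℕ → Equiv.Perm ℕ
  | [] => 1
  | i :: rest => seqPerm rest * Equiv.swap i (i + 1)

/-!
A commuting swap exchanges two adjacent syllables whose generators are adjacent in `Γ`,
hence distinct since `Γ` has no loops; so two positions carrying the same syllable are never
the exchanged pair, and their relative order survives every swap. If the swaps bring `w` back
to itself, the induced permutation maps each finite fibre `{k < |w| | w_k = a}` into itself,
hence onto itself, and is strictly monotone there; a strictly monotone self-bijection of a
subset of a well-order is the identity.
-/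

theorem StrictMonoOn.eq_self_of_bijOn {α : Type*} [LinearOrder α] [WellFoundedLT α]
    {f : α → α} {s : Set α} (hf : StrictMonoOn f s) (hbij : Set.BijOn f s s) :
    ∀ x ∈ s, f x = x := by
  intro x
  induction x using WellFoundedLT.induction with
  | _ x ih =>
    intro hx
    obtain ⟨y, hy, hyx⟩ := hbij.surjOn hx
    have hxy : x ≤ y := by
      by_contra! hlt
      exact hlt.ne (hyx ▸ ih y hlt hy).symm
    have hle : f x ≤ x := hyx ▸ hf.monotoneOn hx hy hxy
    refine hle.antisymm (not_lt.mp fun hlt => hlt.ne ?_)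
    exact hf.injOn (hbij.mapsTo hx) hx (ih (f x) hlt (hbij.mapsTo hx))

section SwapMoves

variable {V : Type*} [Inhabited V]

lemma swap_succ_apply_lt {p k n : ℕ} (hp : p + 1 < n) (hk : k < n) :
    Equiv.swap p (p + 1) k < n := by
  rw [Equiv.swap_apply_def]
  split_ifs <;> omega

lemma swap_succ_apply_lt_swap_succ_apply {p i j : ℕ} (hij : i < j)
    (hne : ¬(i = p ∧ j = p + 1)) :
    Equiv.swap p (p + 1) i < Equiv.swap p (p + 1) j := by
  rw [Equiv.swap_apply_def, Equiv.swap_apply_def]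
  split_ifs <;> omega

lemma length_swapAt' (w : List (V × ℤ)) (p : ℕ) : (swapAt' w p).length = w.length := by
  simp [swapAt']

lemma getD_swapAt'_swap (w : List (V × ℤ)) {p : ℕ} (hp : p + 1 < w.length) (k : ℕ) :
    (swapAt' w p).getD (Equiv.swap p (p + 1) k) default = w.getD k default := by
  have hp' : p < w.length := by omega
  rw [Equiv.swap_apply_def]
  simp only [swapAt', List.getD_eq_getElem?_getD, List.getElem?_set, List.length_set]
  split_ifs with h1 h2 <;> subst_vars <;> simp [hp, hp'] <;> omega

lemma seqPerm_cons_apply (p : ℕ) (rest : List ℕ) (k : ℕ) :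
    seqPerm (p :: rest) k = seqPerm rest (Equiv.swap p (p + 1) k) :=
  rfl

variable (Γ : SimpleGraph V)

lemma seqPerm_lt_length {l : List ℕ} {w : List (V × ℤ)} (hl : ValidSeq Γ l w) {k : ℕ}
    (hk : k < w.length) : seqPerm l k < w.length := by
  induction l generalizing w k with
  | nil => exact hk
  | cons p rest ih =>
    obtain ⟨⟨hp, -⟩, hrest⟩ := hl
    have := ih hrest (k := Equiv.swap p (p + 1) k)
      (by simpa [length_swapAt'] using swap_succ_apply_lt hp hk)
    simpa [seqPerm_cons_apply, length_swapAt'] using this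

lemma getD_applySwaps_seqPerm {l : List ℕ} {w : List (V × ℤ)} (hl : ValidSeq Γ l w) {k : ℕ}
    (hk : k < w.length) : (applySwaps l w).getD (seqPerm l k) default = w.getD k default := by
  induction l generalizing w k with
  | nil => rfl
  | cons p rest ih =>
    obtain ⟨⟨hp, -⟩, hrest⟩ := hl
    have := ih hrest (k := Equiv.swap p (p + 1) k)
      (by simpa [length_swapAt'] using swap_succ_apply_lt hp hk)
    rwa [getD_swapAt'_swap w hp] at this

lemma seqPerm_lt_seqPerm_of_getD_eq {l : List ℕ} {w : List (V × ℤ)} (hl : ValidSeq Γ l w)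
    {i j : ℕ} (hij : i < j) (hj : j < w.length) (heq : w.getD i default = w.getD j default) :
    seqPerm l i < seqPerm l j := by
  induction l generalizing w i j with
  | nil => exact hij
  | cons p rest ih =>
    obtain ⟨⟨hp, hadj⟩, hrest⟩ := hl
    have hne : ¬(i = p ∧ j = p + 1) := by
      rintro ⟨rfl, rfl⟩
      exact Γ.irrefl (heq ▸ hadj)
    exact ih hrest (swap_succ_apply_lt_swap_succ_apply hij hne)
      (by simpa [length_swapAt'] using swap_succ_apply_lt hp hj)
      (by rw [getD_swapAt'_swap w hp, getD_swapAt'_swap w hp, heq])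

lemma seqPerm_eq_self_of_applySwaps_eq {l : List ℕ} {w : List (V × ℤ)} (hl : ValidSeq Γ l w)
    (hfix : applySwaps l w = w) {i : ℕ} (hi : i < w.length) : seqPerm l i = i := by
  set fibre := {k | k < w.length ∧ w.getD k default = w.getD i default}
  have hfinite : fibre.Finite := (Set.finite_lt_nat w.length).subset fun _ hk => hk.1
  have hmaps : Set.MapsTo (seqPerm l) fibre fibre := fun k ⟨hk, hwk⟩ =>
    ⟨seqPerm_lt_length Γ hl hk, by rw [← hwk, ← getD_applySwaps_seqPerm Γ hl hk, hfix]⟩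
  have hmono : StrictMonoOn (seqPerm l) fibre := fun a ⟨_, hwa⟩ b ⟨hb, hwb⟩ hab =>
    seqPerm_lt_seqPerm_of_getD_eq Γ hl hab hb (hwa.trans hwb.symm)
  have hbij := (hfinite.injOn_iff_bijOn_of_mapsTo hmaps).mp (seqPerm l).injective.injOn
  exact hmono.eq_self_of_bijOn hbij i ⟨hi, rfl⟩

end SwapMoves

theorem equal_syllables_keep_order_general {V : Type*} [Inhabited V]
    (Γ : SimpleGraph V) (w : List (V × ℤ))
    (idxs : List ℕ) (hvalid : ValidSeq Γ idxs w) :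
    (∀ i j : ℕ, i < j → j < w.length → w.getD i default = w.getD j default →
      seqPerm idxs i < seqPerm idxs j) ∧
    (applySwaps idxs w = w → ∀ i, i < w.length → seqPerm idxs i = i) :=
  ⟨fun _ _ hij hj heq => seqPerm_lt_seqPerm_of_getD_eq Γ hvalid hij hj heq,
    fun hfix _ hi => seqPerm_eq_self_of_applySwaps_eq Γ hvalid hfix hi⟩

/-- Two identical syllables of a minimal word never exchange their relative order under
commuting swaps; consequently, any sequence of commuting swaps bringing `w` back to
itself induces the identity permutation on the syllables. -/
theorem equal_syllables_keep_order {V : Type*} [DecidableEq V] [Inhabited V]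
    (Γ : SimpleGraph V) (σ : RAAG Γ) (w : List (V × ℤ)) (hmin : IsMinWord Γ σ w)
    (idxs : List ℕ) (hvalid : ValidSeq Γ idxs w) :
    (∀ i j : ℕ, i < j → j < w.length → w.getD i default = w.getD j default →
      seqPerm idxs i < seqPerm idxs j) ∧
    (applySwaps idxs w = w → ∀ i, i < w.length → seqPerm idxs i = i) :=
  equal_syllables_keep_order_general Γ w idxs hvalid
end
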